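/- Let n ≥ 2 and let M be a symmetric linear endomorphism of the Euclidean space ℝⁿ with eigenvalues λ_1 < ⋯ < λ_n and orthonormal eigenvectors e_1, …, e_n. If c > λ_2, then the sublevel set {x : ‖x‖ = 1 ∧ ⟪x, M x⟫ ≤ c} is path-connected (and nonempty). -/

import Mathlib

/-!
Let `V = span {e₁, e₂}`. On `V` the form is `a² λ₁ + b² λ₂ ≤ λ₂ ‖x‖²`, so the unit sphere of `V`
lies in the sublevel set, and it is path-connected because `dim V = 2`. Given `y` in the
sublevel set, the two-dimensional `V` contains a unit `u ⊥ y`, and replacing `u` by `-u` we may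
assume `⟪y, M u⟫ ≤ 0`. Along the quarter great circle `cos θ • y + sin θ • u`, `0 ≤ θ ≤ π/2`,
the form equals `cos² θ f(y) + 2 cos θ sin θ ⟪y, M u⟫ + sin² θ f(u) ≤ c`, so this arc joins `y`
to the sphere of `V` inside the sublevel set.
-/

open Real RealInnerProductSpace Module Submodule Set

variable {E : Type*} [NormedAddCommGroup E] [InnerProductSpace ℝ E]

def unitSublevel (M : E →ₗ[ℝ] E) (c : ℝ) : Set E := {x | ‖x‖ = 1 ∧ ⟪x, M x⟫ ≤ c}

namespace LinearMap.IsSymmetric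

variable {M : E →ₗ[ℝ] E}

theorem inner_map_smul_add_smul_self (hM : M.IsSymmetric) (x u : E) (s t : ℝ) :
    ⟪s • x + t • u, M (s • x + t • u)⟫
      = s ^ 2 * ⟪x, M x⟫ + 2 * s * t * ⟪x, M u⟫ + t ^ 2 * ⟪u, M u⟫ := by
  have hcross : ⟪u, M x⟫ = ⟪x, M u⟫ := by rw [← hM, real_inner_comm]
  simp only [map_add, map_smul, inner_add_left, inner_add_right, real_inner_smul_left,
    real_inner_smul_right, hcross]
  ring

end LinearMap.IsSymmetric

theorem Submodule.exists_norm_eq_one_inner_eq_zero (V : Submodule ℝ E) [FiniteDimensional ℝ V]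
    (hV : 1 < finrank ℝ V) (y : E) : ∃ u ∈ V, ‖u‖ = 1 ∧ ⟪y, u⟫ = 0 := by
  set f : V →ₗ[ℝ] ℝ := (innerₛₗ ℝ y).comp V.subtype
  have hker : LinearMap.ker f ≠ ⊥ := by
    intro h
    have hrange : finrank ℝ (LinearMap.range f) ≤ 1 :=
      (Submodule.finrank_le _).trans_eq (finrank_self ℝ)
    have := LinearMap.finrank_range_add_finrank_ker f
    rw [h, finrank_bot] at this
    omega
  obtain ⟨w, hw, hw0⟩ := Submodule.exists_mem_ne_zero_of_ne_bot hker
  have hw0' : (w : E) ≠ 0 := by exact_mod_cast hw0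
  refine ⟨‖(w : E)‖⁻¹ • (w : E), V.smul_mem _ w.2, norm_smul_inv_norm hw0', ?_⟩
  rw [real_inner_smul_right, show ⟪y, (w : E)⟫ = 0 from hw, mul_zero]

theorem Orthonormal.inner_map_le_of_mem_span {ι : Type*} [Fintype ι] {e : ι → E}
    (he : Orthonormal ℝ e) {M : E →ₗ[ℝ] E} {lam : ι → ℝ} (heig : ∀ i, M (e i) = lam i • e i)
    {c : ℝ} (hc : ∀ i, lam i ≤ c) {x : E} (hx : x ∈ span ℝ (range e)) :
    ⟪x, M x⟫ ≤ c * ‖x‖ ^ 2 := by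
  obtain ⟨a, rfl⟩ := mem_span_range_iff_exists_fun ℝ |>.mp hx
  have hMx : M (∑ i, a i • e i) = ∑ i, (a i * lam i) • e i := by
    simp only [map_sum, map_smul, heig, smul_smul]
  rw [hMx, ← real_inner_self_eq_norm_sq, he.inner_sum, he.inner_sum, Finset.mul_sum]
  refine Finset.sum_le_sum fun i _ ↦ ?_
  simp only [conj_trivial]
  nlinarith [mul_self_nonneg (a i), hc i]

theorem norm_smul_add_smul_eq_one {x u : E} (hx : ‖x‖ = 1) (hu : ‖u‖ = 1) (hxu : ⟪x, u⟫ = 0)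
    {s t : ℝ} (hst : s ^ 2 + t ^ 2 = 1) : ‖s • x + t • u‖ = 1 := by
  have hsq : ‖s • x + t • u‖ ^ 2 = 1 := by
    rw [norm_add_sq_real, norm_smul, norm_smul, real_inner_smul_left, real_inner_smul_right, hxu,
      hx, hu, Real.norm_eq_abs, Real.norm_eq_abs, mul_pow, mul_pow, sq_abs, sq_abs]
    linear_combination hst
  exact (pow_eq_one_iff_of_nonneg (norm_nonneg _) two_ne_zero).mp hsq

namespace unitSublevel

variable {M : E →ₗ[ℝ] E} {c : ℝ}

theorem smul_add_smul_mem (hM : M.IsSymmetric) {x u : E} (hx : x ∈ unitSublevel M c)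
    (hu : u ∈ unitSublevel M c) (hxu : ⟪x, u⟫ = 0) (hxMu : ⟪x, M u⟫ ≤ 0)
    {s t : ℝ} (hs : 0 ≤ s) (ht : 0 ≤ t) (hst : s ^ 2 + t ^ 2 = 1) :
    s • x + t • u ∈ unitSublevel M c := by
  refine ⟨norm_smul_add_smul_eq_one hx.1 hu.1 hxu hst, ?_⟩
  rw [hM.inner_map_smul_add_smul_self]
  calc s ^ 2 * ⟪x, M x⟫ + 2 * s * t * ⟪x, M u⟫ + t ^ 2 * ⟪u, M u⟫
      ≤ s ^ 2 * c + 0 + t ^ 2 * c := by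
        gcongr
        · exact hx.2
        · exact mul_nonpos_of_nonneg_of_nonpos (by positivity) hxMu
        · exact hu.2
    _ = c := by linear_combination c * hst

theorem joinedIn_of_inner_eq_zero (hM : M.IsSymmetric) {x u : E} (hx : x ∈ unitSublevel M c)
    (hu : u ∈ unitSublevel M c) (hxu : ⟪x, u⟫ = 0) (hxMu : ⟪x, M u⟫ ≤ 0) :
    JoinedIn (unitSublevel M c) x u := by
  refine JoinedIn.ofLine (f := fun t : ℝ ↦ Real.cos (π / 2 * t) • x + Real.sin (π / 2 * t) • u)
    (by fun_prop) (by simp) (by simp) ?_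
  rintro _ ⟨t, ⟨ht0, ht1⟩, rfl⟩
  have hθ0 : 0 ≤ π / 2 * t := by positivity
  have hθ1 : π / 2 * t ≤ π / 2 := by nlinarith [Real.pi_pos]
  exact smul_add_smul_mem hM hx hu hxu hxMu
    (Real.cos_nonneg_of_mem_Icc ⟨by linarith [Real.pi_pos], hθ1⟩)
    (Real.sin_nonneg_of_nonneg_of_le_pi hθ0 (by linarith [Real.pi_pos]))
    (Real.cos_sq_add_sin_sq _)

theorem isPathConnected_of_submodule (hM : M.IsSymmetric) (V : Submodule ℝ E)
    [FiniteDimensional ℝ V] (hV : 1 < finrank ℝ V) (hVc : ∀ x ∈ V, ⟪x, M x⟫ ≤ c * ‖x‖ ^ 2) :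
    IsPathConnected (unitSublevel M c) := by
  set T : Set E := (↑) '' Metric.sphere (0 : V) 1
  have hsphere : IsPathConnected T :=
    (isPathConnected_sphere (lt_rank_of_lt_finrank hV) 0 zero_le_one).image continuous_subtype_val
  have hsub : T ⊆ unitSublevel M c := by
    rintro _ ⟨x, hx, rfl⟩
    have hx1 : ‖(x : E)‖ = 1 := by simpa using hx
    refine ⟨hx1, ?_⟩
    simpa [hx1] using hVc x x.2
  obtain ⟨x₀, hx₀, hjoin⟩ := hsphere
  refine ⟨x₀, hsub hx₀, fun y hy ↦ ?_⟩
  obtain ⟨u, huV, hu1, hyu⟩ := V.exists_norm_eq_one_inner_eq_zero hV y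
  obtain ⟨v, hvV, hv1, hyv, hyMv⟩ : ∃ v ∈ V, ‖v‖ = 1 ∧ ⟪y, v⟫ = 0 ∧ ⟪y, M v⟫ ≤ 0 := by
    rcases le_total ⟪y, M u⟫ 0 with h | h
    · exact ⟨u, huV, hu1, hyu, h⟩
    · exact ⟨-u, V.neg_mem huV, by rwa [norm_neg], by simp [hyu], by simpa using h⟩
  have hv : v ∈ T := ⟨⟨v, hvV⟩, by simpa using hv1, rfl⟩
  exact ((hjoin hv).mono hsub).trans (joinedIn_of_inner_eq_zero hM hy (hsub hv) hyv hyMv).symm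

end unitSublevel

/-- If `c > λ_2` (1-indexed; 0-indexed `c > lam 1`), the sublevel set
`{x : ‖x‖ = 1 ∧ ⟪x, M x⟫ ≤ c}` is path-connected (and in particular nonempty). -/
theorem sublevel_path_connected (n : ℕ) (hn : 2 ≤ n)
    (M : EuclideanSpace ℝ (Fin n) →ₗ[ℝ] EuclideanSpace ℝ (Fin n))
    (hM : ∀ x y : EuclideanSpace ℝ (Fin n), ⟪M x, y⟫ = ⟪x, M y⟫)
    (lam : Fin n → ℝ) (hlam : StrictMono lam)
    (e : Fin n → EuclideanSpace ℝ (Fin n)) (he : Orthonormal ℝ e)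
    (heig : ∀ i, M (e i) = lam i • e i)
    (c : ℝ) (hc : lam ⟨1, by omega⟩ < c) :
    IsPathConnected {x : EuclideanSpace ℝ (Fin n) | ‖x‖ = 1 ∧ ⟪x, M x⟫ ≤ c} := by
  have he₂ : Orthonormal ℝ (e ∘ Fin.castLE hn) := he.comp _ (Fin.castLE_injective hn)
  have hlam₂ : ∀ i : Fin 2, lam (Fin.castLE hn i) ≤ c := fun i ↦
    (hlam.monotone (Fin.mk_le_mk.mpr (Nat.le_of_lt_succ i.2))).trans hc.le
  refine unitSublevel.isPathConnected_of_submodule hM (span ℝ (range (e ∘ Fin.castLE hn))) ?_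
    fun x hx ↦ he₂.inner_map_le_of_mem_span (fun i ↦ heig _) hlam₂ hx
  rw [finrank_span_eq_card he₂.linearIndependent, Fintype.card_fin]
  exact one_lt_two
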